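/- arXiv:2201.05212 — 6 statements merged into one kernel-verified Lean document; each statement's English description precedes it below -/
import Mathlib

section
/- Let 𝒰 be a finite nonempty set, let g be a pmf on 𝒰 with g(u) > 0 for all u ∈ 𝒰, and let ω : 𝒰 → ℝ. Set Z := Σ_{u ∈ 𝒰} g(u) e^{-ω(u)} and define the pmf f*(u) := g(u) e^{-ω(u)} / Z. Then for every pmf f on 𝒰, D_KL(f || g) + Σ_{u ∈ 𝒰} f(u) ω(u) ≥ -ln Z, with equality if and only if f = f*. -/
/-- Kullback–Leibler divergence between two pmfs on a finite set:
`D_KL(f||g) = ∑_{s : f s > 0} f s * ln (f s / g s)`. -/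
noncomputable def KL {α : Type} [Fintype α] (f g : α → ℝ) : ℝ :=
  ∑ a, if 0 < f a then f a * Real.log (f a / g a) else 0

/-- Gibbs variational principle. For a strictly positive pmf `g` on a finite
nonempty set `𝒰`, `ω : 𝒰 → ℝ`, `Z = ∑ u, g u * exp (-ω u)` and
`f* u = g u * exp (-ω u) / Z`, every pmf `f` satisfies
`D_KL(f||g) + ∑ u, f u * ω u ≥ -ln Z`, with equality iff `f = f*`. -/
theorem statement7 {𝒰 : Type} [Fintype 𝒰] [Nonempty 𝒰]
    (g : 𝒰 → ℝ) (hg_pos : ∀ u, 0 < g u) (hg_sum : ∑ u, g u = 1)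
    (ω : 𝒰 → ℝ) (Z : ℝ) (hZ : Z = ∑ u, g u * Real.exp (-ω u))
    (fstar : 𝒰 → ℝ) (hfstar : ∀ u, fstar u = g u * Real.exp (-ω u) / Z)
    (f : 𝒰 → ℝ) (hf_nonneg : ∀ u, 0 ≤ f u) (hf_sum : ∑ u, f u = 1) :
    -Real.log Z ≤ KL f g + ∑ u, f u * ω u ∧
      (KL f g + ∑ u, f u * ω u = -Real.log Z ↔ f = fstar) := by
  have hZ_pos : 0 < Z := by
    rw [hZ]
    exact Finset.sum_pos (fun u _ => mul_pos (hg_pos u) (Real.exp_pos _))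
      Finset.univ_nonempty
  have hfs_pos : ∀ u, 0 < fstar u := fun u => by
    rw [hfstar u]; exact div_pos (mul_pos (hg_pos u) (Real.exp_pos _)) hZ_pos
  have hfs_sum : ∑ u, fstar u = 1 := by
    simp only [hfstar]
    rw [← Finset.sum_div, ← hZ, div_self hZ_pos.ne']
  -- termwise identity
  have term_eq : ∀ u, (if 0 < f u then f u * Real.log (f u / fstar u) else 0)
      = (if 0 < f u then f u * Real.log (f u / g u) else 0)
        + f u * ω u + f u * Real.log Z := by
    intro u
    by_cases h : 0 < f u
    · simp only [if_pos h]
      have hfu := h.ne'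
      have hgu := (hg_pos u).ne'
      rw [Real.log_div hfu (hfs_pos u).ne', Real.log_div hfu hgu, hfstar u,
        Real.log_div (by positivity) hZ_pos.ne',
        Real.log_mul hgu (Real.exp_ne_zero _), Real.log_exp]
      ring
    · have h0 : f u = 0 := le_antisymm (not_lt.1 h) (hf_nonneg u)
      simp [h, h0]
  have key : KL f fstar = KL f g + ∑ u, f u * ω u + Real.log Z := by
    unfold KL
    rw [Finset.sum_congr rfl (fun u _ => term_eq u), Finset.sum_add_distrib,
      Finset.sum_add_distrib, ← Finset.sum_mul, hf_sum, one_mul]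
  -- termwise inequality
  have term_ge : ∀ u ∈ Finset.univ,
      f u - fstar u ≤ (if 0 < f u then f u * Real.log (f u / fstar u) else 0) := by
    intro u _
    by_cases h : 0 < f u
    · simp only [if_pos h]
      have hx : 0 < fstar u / f u := div_pos (hfs_pos u) h
      have hlog := Real.log_le_sub_one_of_pos hx
      have hlogeq : Real.log (f u / fstar u) = - Real.log (fstar u / f u) := by
        rw [← Real.log_inv, inv_div]
      have h1 : f u * (fstar u / f u - 1) = fstar u - f u := by
        field_simp
      nlinarith [mul_le_mul_of_nonneg_left hlog h.le]
    · have h0 : f u = 0 := le_antisymm (not_lt.1 h) (hf_nonneg u)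
      simp [h, h0, (hfs_pos u).le]
  have sum_ge : 0 ≤ KL f fstar := by
    have := Finset.sum_le_sum term_ge
    rw [Finset.sum_sub_distrib, hf_sum, hfs_sum] at this
    simpa [KL] using this
  -- equality iff
  have eq_iff : KL f fstar = 0 ↔ f = fstar := by
    constructor
    · intro hKL
      by_contra hne
      obtain ⟨u, hu⟩ := Function.ne_iff.1 hne
      have hlt : f u - fstar u
          < (if 0 < f u then f u * Real.log (f u / fstar u) else 0) := by
        by_cases h : 0 < f u
        · simp only [if_pos h]
          have hx : 0 < fstar u / f u := div_pos (hfs_pos u) h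
          have hx1 : fstar u / f u ≠ 1 := by
            intro h1
            exact hu ((div_eq_one_iff_eq h.ne').1 h1).symm
          have hlog := Real.log_lt_sub_one_of_pos hx hx1
          have hlogeq : Real.log (f u / fstar u) = - Real.log (fstar u / f u) := by
            rw [← Real.log_inv, inv_div]
          have h1 : f u * (fstar u / f u - 1) = fstar u - f u := by
            field_simp
          nlinarith [mul_lt_mul_of_pos_left hlog h]
        · have h0 : f u = 0 := le_antisymm (not_lt.1 h) (hf_nonneg u)
          simp [h, h0, hfs_pos u]
      have := Finset.sum_lt_sum term_ge ⟨u, Finset.mem_univ u, hlt⟩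
      rw [Finset.sum_sub_distrib, hf_sum, hfs_sum] at this
      simp only [sub_self] at this
      rw [KL] at hKL
      linarith
    · intro hfe
      subst hfe
      unfold KL
      apply Finset.sum_eq_zero
      intro u _
      by_cases h : 0 < f u
      · simp [if_pos h, div_self h.ne']
      · simp [h]
  constructor
  · linarith [sum_ge, key]
  · constructor
    · intro he
      exact eq_iff.1 (by rw [key]; linarith)
    · intro hfe
      have := eq_iff.2 hfe
      rw [key] at this
      linarith
end

section
/- Let 𝒰 be a finite nonempty set, g a pmf on 𝒰 with g(u) > 0 for all u, ω : 𝒰 → ℝ, and for j in a finite index set 𝓔 let h^{(j)} : 𝒰 → ℝ and H^{(j)} ∈ ℝ. Suppose λ ∈ ℝ^𝓔 is such that the pmf f_λ(u) := g(u) exp(-ω(u) - Σ_{j ∈ 𝓔} λ_j h^{(j)}(u)) / Z_λ, with Z_λ := Σ_{u ∈ 𝒰} g(u) exp(-ω(u) - Σ_{j ∈ 𝓔} λ_j h^{(j)}(u)), satisfies the moment constraints Σ_{u} f_λ(u) h^{(j)}(u) = H^{(j)} for all j ∈ 𝓔. Then f_λ minimizes D_KL(f || g) + Σ_{u} f(u)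 ω(u) over all pmfs f on 𝒰 satisfying Σ_{u} f(u) h^{(j)}(u) = H^{(j)} for all j ∈ 𝓔. -/
/-- Lagrangian sufficiency with equality (moment) constraints. If the
exponentially tilted pmf `f_λ(u) = g u * exp(-ω u - ∑ j, λ j * h j u) / Z_λ` satisfies the
moment constraints `∑ u, f_λ u * h j u = H j` for all `j`, then `f_λ` is a pmf and it
minimizes `D_KL(f||g) + ∑ u, f u * ω u` over all pmfs `f` satisfying the constraints. -/
theorem statement8 {𝒰 : Type} [Fintype 𝒰] [Nonempty 𝒰] {E : Type} [Fintype E]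
    (g : 𝒰 → ℝ) (hg_pos : ∀ u, 0 < g u) (hg_sum : ∑ u, g u = 1)
    (ω : 𝒰 → ℝ) (h : E → 𝒰 → ℝ) (H : E → ℝ) (lam : E → ℝ)
    (Z : ℝ) (hZ : Z = ∑ u, g u * Real.exp (-ω u - ∑ j, lam j * h j u))
    (flam : 𝒰 → ℝ)
    (hflam : ∀ u, flam u = g u * Real.exp (-ω u - ∑ j, lam j * h j u) / Z)
    (hconstr : ∀ j, ∑ u, flam u * h j u = H j) :
    (∀ u, 0 ≤ flam u) ∧ (∑ u, flam u = 1) ∧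
      ∀ f : 𝒰 → ℝ, (∀ u, 0 ≤ f u) → (∑ u, f u = 1) →
        (∀ j, ∑ u, f u * h j u = H j) →
        KL flam g + ∑ u, flam u * ω u ≤ KL f g + ∑ u, f u * ω u := by
  set S : 𝒰 → ℝ := fun u => ∑ j, lam j * h j u with hS
  have hZpos : 0 < Z := by
    rw [hZ]
    exact Finset.sum_pos (fun u _ => mul_pos (hg_pos u) (Real.exp_pos _))
      Finset.univ_nonempty
  have hfpos : ∀ u, 0 < flam u := by
    intro u; rw [hflam]
    exact div_pos (mul_pos (hg_pos u) (Real.exp_pos _)) hZpos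
  have hfsum : ∑ u, flam u = 1 := by
    have h1 : ∑ u, flam u = (∑ u, g u * Real.exp (-ω u - S u)) / Z := by
      rw [Finset.sum_div]; exact Finset.sum_congr rfl fun u _ => hflam u
    rw [h1, ← hZ, div_self hZpos.ne']
  have hlog : ∀ u, Real.log (flam u / g u) = (-ω u - S u) - Real.log Z := by
    intro u
    have hgne := (hg_pos u).ne'
    have h2 : flam u / g u = Real.exp (-ω u - S u) / Z := by
      rw [hflam]; field_simp; ring
    rw [h2, Real.log_div (Real.exp_ne_zero _) hZpos.ne', Real.log_exp]
  have hsumS : ∀ f : 𝒰 → ℝ, (∀ j, ∑ u, f u * h j u = H j) →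
      ∑ u, f u * S u = ∑ j, lam j * H j := by
    intro f hc
    simp only [hS, Finset.mul_sum]
    rw [Finset.sum_comm]
    refine Finset.sum_congr rfl fun j _ => ?_
    rw [← hc j, Finset.mul_sum]
    exact Finset.sum_congr rfl fun u _ => by ring
  have hval : KL flam g + ∑ u, flam u * ω u = -(∑ j, lam j * H j) - Real.log Z := by
    unfold KL
    rw [← Finset.sum_add_distrib]
    have h3 : ∀ u ∈ Finset.univ,
        (if 0 < flam u then flam u * Real.log (flam u / g u) else 0) + flam u * ω u
        = flam u * (-(S u)) - flam u * Real.log Z := by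
      intro u _
      rw [if_pos (hfpos u), hlog u]; ring
    rw [Finset.sum_congr rfl h3, Finset.sum_sub_distrib, ← Finset.sum_mul, hfsum, one_mul]
    have h4 : ∑ u, flam u * (-(S u)) = -(∑ u, flam u * S u) := by
      rw [← Finset.sum_neg_distrib]
      exact Finset.sum_congr rfl fun u _ => by ring
    rw [h4, hsumS flam hconstr]
  refine ⟨fun u => (hfpos u).le, hfsum, ?_⟩
  intro f hf_nonneg hf_sum hf_constr
  rw [hval]
  have key : ∀ u, -(f u * S u) - f u * Real.log Z + (f u - flam u) ≤
      (if 0 < f u then f u * Real.log (f u / g u) else 0) + f u * ω u := by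
    intro u
    by_cases hfu : 0 < f u
    · rw [if_pos hfu]
      have hlog2 : Real.log (f u / g u)
          = Real.log (f u / flam u) + ((-ω u - S u) - Real.log Z) := by
        rw [← hlog u, Real.log_div hfu.ne' (hg_pos u).ne',
            Real.log_div hfu.ne' (hfpos u).ne',
            Real.log_div (hfpos u).ne' (hg_pos u).ne']
        ring
      have gibbs : f u - flam u ≤ f u * Real.log (f u / flam u) := by
        have hx : 0 < flam u / f u := div_pos (hfpos u) hfu
        have := Real.log_le_sub_one_of_pos hx
        have hneg : Real.log (f u / flam u) = -Real.log (flam u / f u) := by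
          rw [Real.log_div hfu.ne' (hfpos u).ne',
              Real.log_div (hfpos u).ne' hfu.ne']; ring
        rw [hneg]
        have h5 : f u * Real.log (flam u / f u) ≤ f u * (flam u / f u - 1) :=
          mul_le_mul_of_nonneg_left this hfu.le
        have h6 : f u * (flam u / f u - 1) = flam u - f u := by
          field_simp
        nlinarith
      rw [hlog2]
      nlinarith [gibbs]
    · have hfu0 : f u = 0 := le_antisymm (not_lt.mp hfu) (hf_nonneg u)
      rw [if_neg hfu, hfu0]
      simp
      linarith [hfpos u]
  have hsum_le := Finset.sum_le_sum (fun u (_ : u ∈ Finset.univ) => key u)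
  have hlhs : ∑ u, (-(f u * S u) - f u * Real.log Z + (f u - flam u))
      = -(∑ j, lam j * H j) - Real.log Z := by
    rw [Finset.sum_add_distrib, Finset.sum_sub_distrib, Finset.sum_sub_distrib,
        ← Finset.sum_mul, Finset.sum_neg_distrib, hsumS f hf_constr,
        hf_sum, hfsum, one_mul]
    ring
  calc -(∑ j, lam j * H j) - Real.log Z
      = ∑ u, (-(f u * S u) - f u * Real.log Z + (f u - flam u)) := hlhs.symm
    _ ≤ ∑ u, ((if 0 < f u then f u * Real.log (f u / g u) else 0) + f u * ω u) := hsum_le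
    _ = KL f g + ∑ u, f u * ω u := by rw [Finset.sum_add_distrib]; rfl
end

section
/- Let 𝒰 be a finite nonempty set, g a pmf on 𝒰 with g(u) > 0 for all u, ω : 𝒰 → ℝ, and for j in a finite index set 𝓘 let g^{(j)} : 𝒰 → ℝ and G^{(j)} ∈ ℝ. Suppose λ ∈ ℝ^𝓘 with λ_j ≥ 0 for all j is such that the pmf f_λ(u) := g(u) exp(-ω(u) - Σ_{j ∈ 𝓘} λ_j g^{(j)}(u)) / Z_λ, with Z_λ := Σ_{u ∈ 𝒰} g(u) exp(-ω(u) - Σ_{j ∈ 𝓘} λ_j g^{(j)}(u)), satisfies Σ_{u} f_λ(u) g^{(j)}(u) ≤ G^{(j)} for all j ∈ 𝓘 together with complementary slackness λ_j ( Σ_{u} f_λ(u) g^{(j)}(u) - G^{(j)} ) = 0 for all j ∈ 𝓘. Then f_λ minimizes D_KL(f || g) + Σ_{u} f(u) ω(u) over all pmfs f on 𝒰 satisfying Σ_{u} f(u) g^{(j)}(u) ≤ G^{(j)} for all j ∈ 𝓘. -/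
lemma gibbs_aux {α : Type} [Fintype α] (f h : α → ℝ) (hf : ∀ a, 0 ≤ f a)
    (hh : ∀ a, 0 < h a) (hfs : ∑ a, f a = 1) (hhs : ∑ a, h a = 1) :
    0 ≤ KL f h := by
  have key : ∀ a : α, (if 0 < f a then f a - h a else 0) ≤
      (if 0 < f a then f a * Real.log (f a / h a) else 0) := by
    intro a
    by_cases hfa : 0 < f a
    · simp only [if_pos hfa]
      have h1 : Real.log (h a / f a) ≤ h a / f a - 1 :=
        Real.log_le_sub_one_of_pos (div_pos (hh a) hfa)
      have h2 : Real.log (f a / h a) = - Real.log (h a / f a) := by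
        rw [← Real.log_inv]; congr 1; field_simp
      have h3 := mul_le_mul_of_nonneg_left h1 hfa.le
      rw [h2]
      have h4 : f a * (h a / f a - 1) = h a - f a := by field_simp
      nlinarith
    · simp [hfa]
  have h2 : 0 ≤ ∑ a, (if 0 < f a then f a - h a else 0) := by
    have e1 : ∑ a, (if 0 < f a then f a - h a else 0)
        = ∑ a, ((if 0 < f a then f a else 0) - (if 0 < f a then h a else 0)) := by
      apply Finset.sum_congr rfl; intro a _; split <;> simp
    have e2 : ∑ a, (if 0 < f a then f a else 0) = 1 := by
      rw [← hfs]
      apply Finset.sum_congr rfl; intro a _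
      split
      · rfl
      · rename_i hna
        exact (le_antisymm (not_lt.mp hna) (hf a)).symm
    have e3 : ∑ a, (if 0 < f a then h a else 0) ≤ 1 := by
      rw [← hhs]
      apply Finset.sum_le_sum
      intro a _
      split
      · exact le_rfl
      · exact (hh a).le
    rw [e1, Finset.sum_sub_distrib, e2]
    linarith
  calc (0:ℝ) ≤ ∑ a, (if 0 < f a then f a - h a else 0) := h2
    _ ≤ _ := Finset.sum_le_sum fun a _ => key a

/-- Lagrangian sufficiency with inequality constraints. If `λ ≥ 0` is such
that the tilted pmf `f_λ(u) = g u * exp(-ω u - ∑ j, λ j * gc j u) / Z_λ` is feasible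
(`∑ u, f_λ u * gc j u ≤ G j` for all `j`) and complementary slackness
`λ j * (∑ u, f_λ u * gc j u - G j) = 0` holds for all `j`, then `f_λ` is a pmf and it
minimizes `D_KL(f||g) + ∑ u, f u * ω u` over all pmfs `f` satisfying the inequality
constraints. -/
theorem statement9 {𝒰 : Type} [Fintype 𝒰] [Nonempty 𝒰] {I : Type} [Fintype I]
    (g : 𝒰 → ℝ) (hg_pos : ∀ u, 0 < g u) (hg_sum : ∑ u, g u = 1)
    (ω : 𝒰 → ℝ) (gc : I → 𝒰 → ℝ) (G : I → ℝ) (lam : I → ℝ)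
    (hlam_nonneg : ∀ j, 0 ≤ lam j)
    (Z : ℝ) (hZ : Z = ∑ u, g u * Real.exp (-ω u - ∑ j, lam j * gc j u))
    (flam : 𝒰 → ℝ)
    (hflam : ∀ u, flam u = g u * Real.exp (-ω u - ∑ j, lam j * gc j u) / Z)
    (hfeas : ∀ j, ∑ u, flam u * gc j u ≤ G j)
    (hslack : ∀ j, lam j * ((∑ u, flam u * gc j u) - G j) = 0) :
    (∀ u, 0 ≤ flam u) ∧ (∑ u, flam u = 1) ∧
      ∀ f : 𝒰 → ℝ, (∀ u, 0 ≤ f u) → (∑ u, f u = 1) →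
        (∀ j, ∑ u, f u * gc j u ≤ G j) →
        KL flam g + ∑ u, flam u * ω u ≤ KL f g + ∑ u, f u * ω u := by
  have hZpos : 0 < Z := by
    rw [hZ]
    apply Finset.sum_pos
    · intro u _
      exact mul_pos (hg_pos u) (Real.exp_pos _)
    · exact Finset.univ_nonempty
  have hflam_pos : ∀ u, 0 < flam u := fun u => by
    rw [hflam u]; exact div_pos (mul_pos (hg_pos u) (Real.exp_pos _)) hZpos
  have hflam_sum : ∑ u, flam u = 1 := by
    simp_rw [hflam]
    rw [← Finset.sum_div, ← hZ, div_self hZpos.ne']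
  -- expansion identity
  have hexp : ∀ f : 𝒰 → ℝ, (∀ u, 0 ≤ f u) → (∑ u, f u = 1) →
      KL f g + ∑ u, f u * ω u
        = KL f flam - Real.log Z - ∑ j, lam j * ∑ u, f u * gc j u := by
    intro f hfnn hfsum
    have hswap : ∑ j, lam j * ∑ u, f u * gc j u = ∑ u, f u * ∑ j, lam j * gc j u := by
      simp_rw [Finset.mul_sum]
      rw [Finset.sum_comm]
      apply Finset.sum_congr rfl; intro u _
      apply Finset.sum_congr rfl; intro j _
      ring
    have hterm : ∀ u, (if 0 < f u then f u * Real.log (f u / flam u) else 0)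
        = (if 0 < f u then f u * Real.log (f u / g u) else 0)
          + f u * ω u + f u * Real.log Z + f u * (∑ j, lam j * gc j u) := by
      intro u
      by_cases hfu : 0 < f u
      · simp only [if_pos hfu]
        have hgu := hg_pos u
        have hfl := hflam_pos u
        rw [Real.log_div hfu.ne' hfl.ne', Real.log_div hfu.ne' hgu.ne', hflam u,
            Real.log_div (by positivity) hZpos.ne',
            Real.log_mul hgu.ne' (Real.exp_ne_zero _), Real.log_exp]
        ring
      · have hz : f u = 0 := le_antisymm (not_lt.mp hfu) (hfnn u)
        simp [hfu, hz]
    have hKL : KL f flam = KL f g + (∑ u, f u * ω u) + (∑ u, f u * Real.log Z)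
        + (∑ u, f u * (∑ j, lam j * gc j u)) := by
      unfold KL
      rw [← Finset.sum_add_distrib, ← Finset.sum_add_distrib, ← Finset.sum_add_distrib]
      exact Finset.sum_congr rfl fun u _ => hterm u
    have hlogZ : ∑ u, f u * Real.log Z = Real.log Z := by
      rw [← Finset.sum_mul, hfsum, one_mul]
    rw [hswap]
    rw [hKL, hlogZ]
    ring
  refine ⟨fun u => (hflam_pos u).le, hflam_sum, ?_⟩
  intro f hfnn hfsum hfcon
  have h1 := hexp flam (fun u => (hflam_pos u).le) hflam_sum
  have h2 := hexp f hfnn hfsum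
  have hKLflam : KL flam flam = 0 := by
    unfold KL
    apply Finset.sum_eq_zero
    intro u _
    rw [div_self (hflam_pos u).ne', Real.log_one, mul_zero, if_pos (hflam_pos u)]
  have hslack' : ∑ j, lam j * ∑ u, flam u * gc j u = ∑ j, lam j * G j := by
    apply Finset.sum_congr rfl
    intro j _
    have := hslack j
    nlinarith [hslack j]
  have hfbound : ∑ j, lam j * ∑ u, f u * gc j u ≤ ∑ j, lam j * G j := by
    apply Finset.sum_le_sum
    intro j _
    exact mul_le_mul_of_nonneg_left (hfcon j) (hlam_nonneg j)
  have hgibbs : 0 ≤ KL f flam := gibbs_aux f flam hfnn hflam_pos hfsum hflam_sum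
  rw [h1, h2, hKLflam, hslack']
  linarith
end

section
/- Let 𝒳 be a finite nonempty set, let p(·|x) be a pmf on 𝒳 with p(x'|x) > 0 for all x', let q : 𝒳 → ℝ be a state cost and v : 𝒳 → ℝ. Define the desirability function z(x') := e^{-v(x')} and G_z(x) := Σ_{x' ∈ 𝒳} p(x'|x) z(x'). Then the minimum over all pmfs π(·|x) on 𝒳 of the immediate cost plus expected cost-to-go, q(x) + D_KL(π(·|x) || p(·|x)) + Σ_{x'} π(x'|x) v(x'), equals q(x) - ln G_z(x), and it is attained uniquely by the twisted kernel π*(x'|x) = p(x'|x) z(x') / G_z(x). -/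
lemma gibbs {α : Type} [Fintype α] (f g : α → ℝ) (hf : ∀ a, 0 ≤ f a)
    (hg : ∀ a, 0 < g a) (hfs : ∑ a, f a = 1) (hgs : ∑ a, g a = 1) :
    0 ≤ KL f g ∧ (KL f g = 0 ↔ f = g) := by
  have hterm : ∀ a : α, f a - g a ≤ (if 0 < f a then f a * Real.log (f a / g a) else 0) := by
    intro a
    by_cases h : 0 < f a
    · simp only [h, if_true]
      have hga := hg a
      have hlog : Real.log (g a / f a) ≤ g a / f a - 1 :=
        Real.log_le_sub_one_of_pos (by positivity)
      have h1 : Real.log (f a / g a) = - Real.log (g a / f a) := by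
        rw [← Real.log_inv]
        congr 1
        field_simp
      rw [h1]
      have h2 : f a * (g a / f a - 1) = g a - f a := by field_simp
      nlinarith [mul_le_mul_of_nonneg_left hlog (le_of_lt h)]
    · simp only [h, if_false]
      have hfa : f a = 0 := le_antisymm (not_lt.1 h) (hf a)
      have := hg a
      linarith
  have hsum : ∑ a, (f a - g a) ≤ KL f g := by
    unfold KL
    exact Finset.sum_le_sum (fun a _ => hterm a)
  have hsz : ∑ a, (f a - g a) = 0 := by
    rw [Finset.sum_sub_distrib, hfs, hgs]; ring
  refine ⟨by linarith, ?_, ?_⟩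
  · intro h0
    have hslack : ∑ a, ((if 0 < f a then f a * Real.log (f a / g a) else 0) - (f a - g a)) = 0 := by
      rw [Finset.sum_sub_distrib, hsz]
      unfold KL at h0
      rw [h0]
      ring
    have heq : ∀ a ∈ Finset.univ,
        (if 0 < f a then f a * Real.log (f a / g a) else 0) - (f a - g a) = 0 :=
      (Finset.sum_eq_zero_iff_of_nonneg (fun a _ => sub_nonneg.2 (hterm a))).1 hslack
    funext a
    have ha := sub_eq_zero.1 (heq a (Finset.mem_univ a))
    by_cases h : 0 < f a
    · simp only [h, if_true] at ha
      by_contra hne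
      have hga := hg a
      have hne' : g a / f a ≠ 1 := by
        intro hc
        apply hne
        field_simp at hc
        linarith
      have hlog : Real.log (g a / f a) < g a / f a - 1 :=
        Real.log_lt_sub_one_of_pos (by positivity) hne'
      have h1 : Real.log (f a / g a) = - Real.log (g a / f a) := by
        rw [← Real.log_inv]
        congr 1
        field_simp
      rw [h1] at ha
      have h2 : f a * (g a / f a - 1) = g a - f a := by field_simp
      nlinarith [mul_lt_mul_of_pos_left hlog h]
    · simp only [h, if_false] at ha
      have hfa : f a = 0 := le_antisymm (not_lt.1 h) (hf a)
      have := hg a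
      linarith
  · intro hfg
    subst hfg
    unfold KL
    apply Finset.sum_eq_zero
    intro a _
    by_cases h : 0 < f a
    · simp [h, Real.log_div (ne_of_gt h) (ne_of_gt h)]
    · simp [h]

/-- one-step KL-control. With passive dynamics `p(·|x)` strictly positive,
state cost `q`, cost-to-go `v`, desirability `z = exp(-v)` and `G_z(x) = ∑ x', p x x' * z x'`,
the minimum over all pmfs `π(·|x)` of `q x + D_KL(π(·|x)||p(·|x)) + ∑ x', π x' * v x'`
equals `q x - ln G_z(x)`, attained uniquely by the twisted kernel
`π*(x'|x) = p x x' * z x' / G_z(x)`. -/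
theorem statement10 {𝒳 : Type} [Fintype 𝒳] [Nonempty 𝒳]
    (x : 𝒳) (p : 𝒳 → 𝒳 → ℝ)
    (hp_pos : ∀ x', 0 < p x x') (hp_sum : ∑ x', p x x' = 1)
    (q v : 𝒳 → ℝ)
    (z : 𝒳 → ℝ) (hz : ∀ x', z x' = Real.exp (-v x'))
    (Gz : ℝ) (hGz : Gz = ∑ x', p x x' * z x')
    (pistar : 𝒳 → ℝ) (hpistar : ∀ x', pistar x' = p x x' * z x' / Gz) :
    ((∀ x', 0 ≤ pistar x') ∧ ∑ x', pistar x' = 1) ∧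
    ∀ π : 𝒳 → ℝ, (∀ x', 0 ≤ π x') → (∑ x', π x' = 1) →
      (q x - Real.log Gz ≤ q x + KL π (p x) + ∑ x', π x' * v x' ∧
        (q x + KL π (p x) + ∑ x', π x' * v x' = q x - Real.log Gz ↔ π = pistar)) := by
  have hzpos : ∀ a, 0 < z a := fun a => (hz a) ▸ Real.exp_pos _
  have hGzpos : 0 < Gz := by
    rw [hGz]
    exact Finset.sum_pos (fun a _ => mul_pos (hp_pos a) (hzpos a)) Finset.univ_nonempty
  have hpistar_pos : ∀ a, 0 < pistar a := fun a => by
    rw [hpistar a]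
    have h1 := hp_pos a
    have h2 := hzpos a
    positivity
  have hpistar_sum : ∑ a, pistar a = 1 := by
    simp only [hpistar]
    rw [← Finset.sum_div, ← hGz, div_self (ne_of_gt hGzpos)]
  refine ⟨⟨fun a => le_of_lt (hpistar_pos a), hpistar_sum⟩, ?_⟩
  intro π hπ0 hπ1
  -- key identity
  have key : KL π (p x) + ∑ a, π a * v a = KL π pistar - Real.log Gz := by
    have hterm : ∀ a : 𝒳,
        (if 0 < π a then π a * Real.log (π a / pistar a) else 0) =
        (if 0 < π a then π a * Real.log (π a / p x a) else 0)
          + π a * v a + π a * Real.log Gz := by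
      intro a
      by_cases h : 0 < π a
      · simp only [h, if_true]
        have hpa := hp_pos a
        have hza := hzpos a
        have hlogz : Real.log (z a) = - v a := by rw [hz a, Real.log_exp]
        have hlps : Real.log (pistar a) =
            Real.log (p x a) + Real.log (z a) - Real.log Gz := by
          rw [hpistar a, Real.log_div (by positivity) (ne_of_gt hGzpos),
            Real.log_mul (ne_of_gt hpa) (ne_of_gt hza)]
        rw [Real.log_div (ne_of_gt h) (ne_of_gt (hpistar_pos a)),
          Real.log_div (ne_of_gt h) (ne_of_gt hpa), hlps, hlogz]
        ring
      · have hpa : π a = 0 := le_antisymm (not_lt.1 h) (hπ0 a)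
        simp [h, hpa]
    unfold KL
    rw [Finset.sum_congr rfl (fun a _ => hterm a)]
    rw [Finset.sum_add_distrib, Finset.sum_add_distrib, ← Finset.sum_mul, hπ1]
    ring
  obtain ⟨hge, hiff⟩ := gibbs π pistar hπ0 hpistar_pos hπ1 hpistar_sum
  constructor
  · linarith
  · constructor
    · intro heq
      apply hiff.1
      linarith
    · intro heq
      have := hiff.2 heq
      linarith
end

section
/- Let 𝒳 be a finite nonempty set, let p(·|x) be a pmf on 𝒳 with p(x'|x) > 0 for all x, x', and let q : 𝒳 → ℝ. A function v : 𝒳 → ℝ satisfies the stationary KL-control Bellman equation v(x) = min over pmfs π(·|x) on 𝒳 of [ q(x) + D_KL(π(·|x) || p(·|x)) + Σ_{x'} π(x'|x) v(x') ] for all x ∈ 𝒳 if and only if the strictly positive function z := e^{-v} satisfies the linear equation z(x) = e^{-q(x)} Σ_{x' ∈ 𝒳} p(x'|x) z(x') for all x ∈ 𝒳; that is, the exponential transformation z = e^{-v} linearizes the Bellman equation into the fixed-point equation z = diag(e^{-q}) P z, where P is the matrix of passive transition probabilities. -/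
/-- `v` satisfies the stationary KL-control Bellman equation
`v x = min over pmfs π(·|x) of (q x + D_KL(π(·|x)||p(·|x)) + ∑ x', π x' * v x')` for all `x`
iff the exponentiated function `z = exp (-v)` satisfies the linear fixed-point equation
`z x = exp (-q x) * ∑ x', p x x' * z x'` for all `x`. -/
theorem statement11 {𝒳 : Type} [Fintype 𝒳] [Nonempty 𝒳]
    (p : 𝒳 → 𝒳 → ℝ) (hp_pos : ∀ x x', 0 < p x x') (hp_sum : ∀ x, ∑ x', p x x' = 1)
    (q : 𝒳 → ℝ) (v : 𝒳 → ℝ) :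
    (∀ x, v x = sInf {c : ℝ | ∃ π : 𝒳 → ℝ, (∀ x', 0 ≤ π x') ∧ (∑ x', π x' = 1) ∧
        c = q x + KL π (p x) + ∑ x', π x' * v x'}) ↔
    (∀ x, Real.exp (-v x) = Real.exp (-q x) * ∑ x', p x x' * Real.exp (-v x')) := by
  set Z : 𝒳 → ℝ := fun x => ∑ x', p x x' * Real.exp (-v x') with hZ
  have hZpos : ∀ x, 0 < Z x := fun x =>
    Finset.sum_pos (fun a _ => mul_pos (hp_pos x a) (Real.exp_pos _)) Finset.univ_nonempty
  have hlog : ∀ t : ℝ, 0 < t → 1 - 1/t ≤ Real.log t := by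
    intro t ht
    have h1 := Real.log_le_sub_one_of_pos (show (0:ℝ) < 1/t by positivity)
    rw [Real.log_div one_ne_zero ht.ne', Real.log_one] at h1
    linarith
  have key : ∀ x, sInf {c : ℝ | ∃ π : 𝒳 → ℝ, (∀ x', 0 ≤ π x') ∧ (∑ x', π x' = 1) ∧
      c = q x + KL π (p x) + ∑ x', π x' * v x'} = q x - Real.log (Z x) := by
    intro x
    have hmem : (q x - Real.log (Z x)) ∈ {c : ℝ | ∃ π : 𝒳 → ℝ, (∀ x', 0 ≤ π x') ∧
        (∑ x', π x' = 1) ∧ c = q x + KL π (p x) + ∑ x', π x' * v x'} := by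
      refine ⟨fun a => p x a * Real.exp (-v a) / Z x, fun a => div_nonneg (mul_pos (hp_pos x a) (Real.exp_pos _)).le (hZpos x).le, ?_, ?_⟩
      · rw [← Finset.sum_div]
        exact div_self (hZpos x).ne'
      · have hterm : ∀ a : 𝒳,
            (if 0 < p x a * Real.exp (-v a) / Z x then
              (p x a * Real.exp (-v a) / Z x) *
                Real.log ((p x a * Real.exp (-v a) / Z x) / p x a) else 0)
            + (p x a * Real.exp (-v a) / Z x) * v a
            = (p x a * Real.exp (-v a) / Z x) * (-Real.log (Z x)) := by
          intro a
          have hpa : 0 < p x a * Real.exp (-v a) / Z x := div_pos (mul_pos (hp_pos x a) (Real.exp_pos (-v a))) (hZpos x)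
          rw [if_pos hpa]
          have hdiv : (p x a * Real.exp (-v a) / Z x) / p x a = Real.exp (-v a) / Z x := by
            field_simp [(hp_pos x a).ne', (hZpos x).ne']
          rw [hdiv, Real.log_div (Real.exp_pos _).ne' (hZpos x).ne', Real.log_exp]
          ring
        have : KL (fun a => p x a * Real.exp (-v a) / Z x) (p x)
            + ∑ x', (p x x' * Real.exp (-v x') / Z x) * v x' = -Real.log (Z x) := by
          unfold KL
          rw [← Finset.sum_add_distrib]
          calc (∑ a, ((if 0 < p x a * Real.exp (-v a) / Z x then
                (p x a * Real.exp (-v a) / Z x) *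
                  Real.log ((p x a * Real.exp (-v a) / Z x) / p x a) else 0)
              + (p x a * Real.exp (-v a) / Z x) * v a))
              = ∑ a, (p x a * Real.exp (-v a) / Z x) * (-Real.log (Z x)) := by
                exact Finset.sum_congr rfl (fun a _ => hterm a)
            _ = (∑ a, p x a * Real.exp (-v a) / Z x) * (-Real.log (Z x)) := by
                rw [Finset.sum_mul]
            _ = -Real.log (Z x) := by
                rw [← Finset.sum_div, div_self (hZpos x).ne', one_mul]
        rw [add_assoc, this]
        ring
    have hlb : ∀ c ∈ {c : ℝ | ∃ π : 𝒳 → ℝ, (∀ x', 0 ≤ π x') ∧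
        (∑ x', π x' = 1) ∧ c = q x + KL π (p x) + ∑ x', π x' * v x'},
        q x - Real.log (Z x) ≤ c := by
      rintro c ⟨π, hπ0, hπ1, rfl⟩
      have hterm : ∀ a : 𝒳,
          π a - p x a * Real.exp (-v a) / Z x ≤
          ((if 0 < π a then π a * Real.log (π a / p x a) else 0) + π a * v a)
            + π a * Real.log (Z x) := by
        intro a
        rcases lt_or_eq_of_le (hπ0 a) with hpos | hzero
        · rw [if_pos hpos]
          have ht : 0 < π a * Z x / (p x a * Real.exp (-v a)) := div_pos (mul_pos hpos (hZpos x)) (mul_pos (hp_pos x a) (Real.exp_pos (-v a)))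
          have h1 := hlog _ ht
          have h2 : Real.log (π a * Z x / (p x a * Real.exp (-v a)))
              = Real.log (π a / p x a) + v a + Real.log (Z x) := by
            rw [Real.log_div (mul_pos hpos (hZpos x)).ne' (mul_pos (hp_pos x a) (Real.exp_pos (-v a))).ne',
              Real.log_mul hpos.ne' (hZpos x).ne',
              Real.log_mul (hp_pos x a).ne' (Real.exp_pos _).ne',
              Real.log_exp, Real.log_div hpos.ne' (hp_pos x a).ne']
            ring
          rw [h2] at h1
          have h3 : π a * (1 - 1 / (π a * Z x / (p x a * Real.exp (-v a))))
              = π a - p x a * Real.exp (-v a) / Z x := by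
            field_simp [hpos.ne', (hZpos x).ne']
          nlinarith [mul_le_mul_of_nonneg_left h1 (hπ0 a)]
        · rw [if_neg (by rw [← hzero]; exact lt_irrefl 0), ← hzero]
          have : 0 < p x a * Real.exp (-v a) / Z x := div_pos (mul_pos (hp_pos x a) (Real.exp_pos (-v a))) (hZpos x)
          simp only [zero_mul, add_zero, zero_add, zero_sub]
          linarith
      have hsum := Finset.sum_le_sum (s := Finset.univ) (fun a _ => hterm a)
      rw [Finset.sum_sub_distrib, hπ1, ← Finset.sum_div, div_self (hZpos x).ne'] at hsum
      rw [Finset.sum_add_distrib, Finset.sum_add_distrib, ← Finset.sum_mul, hπ1,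
        one_mul] at hsum
      have : -Real.log (Z x) ≤ KL π (p x) + ∑ x', π x' * v x' := by
        unfold KL; linarith
      linarith
    exact le_antisymm (csInf_le ⟨q x - Real.log (Z x), hlb⟩ hmem)
      (le_csInf ⟨_, hmem⟩ hlb)
  simp only [key]
  constructor <;> intro h x <;> have hx := h x
  · rw [hx]
    rw [show -(q x - Real.log (Z x)) = -q x + Real.log (Z x) by ring, Real.exp_add,
      Real.exp_log (hZpos x)]
  · have hx' : Real.exp (-v x) = Real.exp (-q x) * Z x := hx
    rw [← Real.exp_log (hZpos x), ← Real.exp_add, Real.exp_eq_exp] at hx'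
    linarith
end

section
/- Let 𝒳 and 𝒰 be finite nonempty sets and T a positive integer. Given, for each k ∈ 1:T, system transition pmfs f_{x,k}(·|x,u) on 𝒳, reference transition pmfs g_{x,k}(·|x,u) on 𝒳 with full support, reference policies g_{u,k}(·|x) on 𝒰 with full support, and a shared prior f_0 = g_0 on 𝒳. Define backward γ_T(x) := 1 and, for k = T-1 down to 0, γ_k(x) := Σ_{u ∈ 𝒰} g_{u,k+1}(u|x) exp( -D_KL(f_{x,k+1}(·|x,u) || g_{x,k+1}(·|x,u)) + Σ_{x'} f_{x,k+1}(x'|x,u) ln γ_{k+1}(x') ), and set ω̂_k(u, x) := D_KL(f_{x,k}(·|x,u) || g_{x,k}(·|x,u)) - Σ_{x'} f_{x,k}(x'|x,u) ln γ_k(x'). Then γ_k(x) > 0 for all k and x, for each k and x the function f*_{u,k}(u|x) := g_{u,k}(u|x) e^{-ω̂_k(u,x)} / γ_{k-1}(x) is a pmf on 𝒰, and the policy sequence {f*_{u,k}}_{k ∈ 1:T} minimizes D_KL(f || g) over all policy sequences {f_{u,k}}_{k ∈ 1:T}, where f := f_0(x_0) ∏_{k=1}^{T} f_{x,k}(x_k|x_{k-1},u_k)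 f_{u,k}(u_k|x_{k-1}) and g := g_0(x_0) ∏_{k=1}^{T} g_{x,k}(x_k|x_{k-1},u_k) g_{u,k}(u_k|x_{k-1}) are the joint trajectory pmfs on 𝒳 × (𝒰 × 𝒳)^T; moreover the minimum value equals -Σ_{x_0 ∈ 𝒳} f_0(x_0) ln γ_0(x_0). -/
/-- Backward FPD recursion, reparametrized: `gamAux T fx gx gu m = γ_{T - m}`, so that
`gamAux ... 0 = γ_T = 1` and, for `k = T - (m+1)`,
`γ_k(x) = ∑ u, g_{u,k+1}(u|x) * exp(-D_KL(f_{x,k+1}(·|x,u)||g_{x,k+1}(·|x,u))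
  + ∑ x', f_{x,k+1}(x'|x,u) ln γ_{k+1}(x'))` (note `k + 1 = T - m`). -/
noncomputable def gamAux {𝒳 𝒰 : Type} [Fintype 𝒳] [Fintype 𝒰] (T : ℕ)
    (fx gx : ℕ → 𝒳 → 𝒰 → 𝒳 → ℝ) (gu : ℕ → 𝒳 → 𝒰 → ℝ) : ℕ → 𝒳 → ℝ
  | 0 => fun _ => 1
  | m + 1 => fun x => ∑ u, gu (T - m) x u *
      Real.exp (-(KL (fx (T - m) x u) (gx (T - m) x u)) +
        ∑ x', fx (T - m) x u x' * Real.log (gamAux T fx gx gu m x'))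

open Finset Real

section KLDivergence

variable {α β : Type} [Fintype α] [Fintype β]

def IsPmf (p : α → ℝ) : Prop := (∀ a, 0 ≤ p a) ∧ ∑ a, p a = 1

lemma IsPmf.prod {p : α → ℝ} {P : α → β → ℝ} (hp : IsPmf p) (hP : ∀ a, IsPmf (P a)) :
    IsPmf fun ab : α × β => p ab.1 * P ab.1 ab.2 := by
  refine ⟨fun ab => mul_nonneg (hp.1 _) ((hP _).1 _), ?_⟩
  simp only [Fintype.sum_prod_type, ← mul_sum, (hP _).2, mul_one, hp.2]

lemma IsPmf.of_comp_equiv {p : β → ℝ} (e : α ≃ β) (h : IsPmf (p ∘ e)) : IsPmf p :=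
  ⟨e.surjective.forall.2 h.1, (e.sum_comp p).symm.trans h.2⟩

lemma isPmf_div_sum [Nonempty α] {q : α → ℝ} (hq : ∀ a, 0 < q a) :
    IsPmf fun a => q a / ∑ b, q b := by
  have hZ : 0 < ∑ b, q b := sum_pos (fun a _ => hq a) univ_nonempty
  exact ⟨fun a => (div_pos (hq a) hZ).le, by rw [← sum_div, div_self hZ.ne']⟩

lemma KL_comp_equiv (e : α ≃ β) (f g : β → ℝ) : KL (f ∘ e) (g ∘ e) = KL f g :=
  e.sum_comp fun b => if 0 < f b then f b * log (f b / g b) else 0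

lemma KL_self (p : α → ℝ) : KL p p = 0 :=
  sum_eq_zero fun a _ => by
    split_ifs with h
    · rw [div_self h.ne', log_one, mul_zero]
    · rfl

lemma KL_mul_exp {p q : α → ℝ} (c : α → ℝ) (hp : ∀ a, 0 ≤ p a) (hq : ∀ a, 0 < q a) :
    KL p (fun a => q a * exp (-c a)) = KL p q + ∑ a, p a * c a := by
  rw [KL, KL, ← sum_add_distrib]
  refine sum_congr rfl fun a _ => ?_
  rcases (hp a).lt_or_eq with ha | ha
  · rw [if_pos ha, if_pos ha, div_mul_eq_div_div, log_div (div_pos ha (hq a)).ne' (exp_pos _).ne',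
      log_exp]
    ring
  · simp [← ha]

/-- Gibbs' inequality for an unnormalised second argument. -/
lemma neg_log_sum_le_KL [Nonempty α] {p q : α → ℝ} (hp : IsPmf p) (hq : ∀ a, 0 < q a) :
    -log (∑ a, q a) ≤ KL p q := by
  set Z := ∑ a, q a
  have hZ : 0 < Z := sum_pos (fun a _ => hq a) univ_nonempty
  have key : ∀ a, p a - q a / Z - p a * log Z ≤
      if 0 < p a then p a * log (p a / q a) else 0 := by
    intro a
    split_ifs with ha
    · -- `1 - 1/y ≤ log y` at `y = p a * Z / q a`
      have h := one_sub_inv_le_log_of_pos (div_pos (mul_pos ha hZ) (hq a))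
      rw [log_div (mul_pos ha hZ).ne' (hq a).ne', log_mul ha.ne' hZ.ne', inv_div] at h
      rw [log_div ha.ne' (hq a).ne']
      have := mul_le_mul_of_nonneg_left h ha.le
      rw [mul_sub, mul_one, mul_div_assoc', mul_div_mul_left _ _ ha.ne'] at this
      linarith
    · have hpa : p a = 0 := le_antisymm (not_lt.1 ha) (hp.1 a)
      have := div_pos (hq a) hZ
      simp only [hpa, zero_sub, zero_mul, sub_zero, neg_nonpos]
      exact this.le
  calc -log Z = ∑ a, (p a - q a / Z - p a * log Z) := by
        rw [sum_sub_distrib, sum_sub_distrib, ← sum_div, ← sum_mul, hp.2, div_self hZ.ne']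
        ring
    _ ≤ KL p q := sum_le_sum fun a _ => key a

lemma KL_div_sum [Nonempty α] {q : α → ℝ} (hq : ∀ a, 0 < q a) :
    KL (fun a => q a / ∑ b, q b) q = -log (∑ a, q a) := by
  set Z := ∑ b, q b
  have hZ : 0 < Z := sum_pos (fun a _ => hq a) univ_nonempty
  have hterm : ∀ a, (if 0 < q a / Z then q a / Z * log (q a / Z / q a) else 0) =
      -(q a / Z * log Z) := by
    intro a
    rw [if_pos (div_pos (hq a) hZ), div_div_cancel_left' (hq a).ne', log_inv]
    ring
  rw [KL, sum_congr rfl fun a _ => hterm a, sum_neg_distrib, ← sum_mul, ← sum_div,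
    div_self hZ.ne', one_mul]

lemma KL_chain_rule {p q : α → ℝ} {P Q : α → β → ℝ} (hp : ∀ a, 0 ≤ p a)
    (hpq : ∀ a, 0 < p a → 0 < q a) (hP : ∀ a, IsPmf (P a)) (hQ : ∀ a b, 0 < Q a b) :
    KL (fun ab : α × β => p ab.1 * P ab.1 ab.2) (fun ab => q ab.1 * Q ab.1 ab.2) =
      KL p q + ∑ a, p a * KL (P a) (Q a) := by
  simp only [KL, Fintype.sum_prod_type, ← sum_add_distrib]
  refine sum_congr rfl fun a _ => ?_
  rcases (hp a).lt_or_eq with ha | ha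
  · have hterm : ∀ b, (if 0 < p a * P a b then
          p a * P a b * log (p a * P a b / (q a * Q a b)) else 0) =
        p a * log (p a / q a) * P a b +
          p a * (if 0 < P a b then P a b * log (P a b / Q a b) else 0) := by
      intro b
      rcases ((hP a).1 b).lt_or_eq with hb | hb
      · rw [if_pos (mul_pos ha hb), if_pos hb, mul_div_mul_comm,
          log_mul (div_pos ha (hpq a ha)).ne' (div_pos hb (hQ a b)).ne']
        ring
      · simp [← hb]
    rw [sum_congr rfl fun b _ => hterm b, sum_add_distrib, ← mul_sum, ← mul_sum, (hP a).2,
      if_pos ha, mul_one]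
  · simp [← ha]

end KLDivergence

section Trajectory

variable {𝒳 𝒰 : Type}

abbrev Traj (𝒳 𝒰 : Type) (T : ℕ) : Type := (Fin (T + 1) → 𝒳) × (Fin T → 𝒰)

def trajPmf (T : ℕ) (fx : ℕ → 𝒳 → 𝒰 → 𝒳 → ℝ) (fu : ℕ → 𝒳 → 𝒰 → ℝ) (p0 : 𝒳 → ℝ)
    (t : Traj 𝒳 𝒰 T) : ℝ :=
  p0 (t.1 0) * ∏ k : Fin T,
    fx ((k : ℕ) + 1) (t.1 k.castSucc) (t.2 k) (t.1 k.succ) *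
      fu ((k : ℕ) + 1) (t.1 k.castSucc) (t.2 k)

def trajZeroEquiv : Traj 𝒳 𝒰 0 ≃ 𝒳 :=
  (Equiv.prodUnique _ _).trans (Equiv.funUnique (Fin 1) 𝒳)

def trajConsEquiv (T : ℕ) : 𝒳 × 𝒰 × Traj 𝒳 𝒰 T ≃ Traj 𝒳 𝒰 (T + 1) where
  toFun s := (Fin.cons s.1 s.2.2.1, Fin.cons s.2.1 s.2.2.2)
  invFun t := (t.1 0, t.2 0, Fin.tail t.1, Fin.tail t.2)
  left_inv s := by simp
  right_inv t := by simp

variable {T : ℕ} {fx : ℕ → 𝒳 → 𝒰 → 𝒳 → ℝ} {fu : ℕ → 𝒳 → 𝒰 → ℝ} {p0 : 𝒳 → ℝ}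

lemma trajPmf_zero_eq_comp : trajPmf 0 fx fu p0 = p0 ∘ trajZeroEquiv := by
  funext t
  simp [trajPmf, trajZeroEquiv]

lemma trajPmf_comp_consEquiv :
    trajPmf (T + 1) fx fu p0 ∘ trajConsEquiv T = fun s => p0 s.1 *
      (fu 1 s.1 s.2.1 * trajPmf T (fun k => fx (k + 1)) (fun k => fu (k + 1)) (fx 1 s.1 s.2.1)
        s.2.2) := by
  funext ⟨x, u, xs, us⟩
  simp only [Function.comp_apply, trajConsEquiv, Equiv.coe_fn_mk, trajPmf, Fin.prod_univ_succ,
    Fin.cons_zero, Fin.castSucc_zero, Fin.cons_succ, ← Fin.succ_castSucc, Fin.val_zero,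
    Fin.val_succ, zero_add]
  ring

lemma trajPmf_pos (hfx : ∀ k x u x', 0 < fx k x u x') (hfu : ∀ k x u, 0 < fu k x u)
    (hp0 : ∀ x, 0 < p0 x) (t : Traj 𝒳 𝒰 T) : 0 < trajPmf T fx fu p0 t :=
  mul_pos (hp0 _) (prod_pos fun _ _ => mul_pos (hfx _ _ _ _) (hfu _ _ _))

variable [Fintype 𝒰]

def IsPolicy (T : ℕ) (fu : ℕ → 𝒳 → 𝒰 → ℝ) : Prop := ∀ k, 1 ≤ k → k ≤ T → ∀ x, IsPmf (fu k x)

lemma IsPolicy.shift (h : IsPolicy (T + 1) fu) : IsPolicy T fun k => fu (k + 1) :=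
  fun k hk hkT => h (k + 1) (by omega) (by omega)

variable [Fintype 𝒳]

lemma isPmf_trajPmf (hfx : ∀ k x u, IsPmf (fx k x u)) (hfu : IsPolicy T fu) (hp0 : IsPmf p0) :
    IsPmf (trajPmf T fx fu p0) := by
  induction T generalizing fx fu p0 with
  | zero => exact trajPmf_zero_eq_comp ▸ hp0.of_comp_equiv trajZeroEquiv.symm
  | succ T ih =>
    refine .of_comp_equiv (trajConsEquiv T) ?_
    rw [trajPmf_comp_consEquiv]
    exact hp0.prod fun x => (hfu 1 le_rfl (by omega) x).prod fun u =>
      ih (fun k => hfx (k + 1)) hfu.shift (hfx 1 x u)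

lemma KL_trajPmf_zero (gx : ℕ → 𝒳 → 𝒰 → 𝒳 → ℝ) (gu : ℕ → 𝒳 → 𝒰 → ℝ) (q0 : 𝒳 → ℝ) :
    KL (trajPmf 0 fx fu p0) (trajPmf 0 gx gu q0) = KL p0 q0 := by
  rw [trajPmf_zero_eq_comp, trajPmf_zero_eq_comp, KL_comp_equiv]

lemma KL_trajPmf_succ {gx : ℕ → 𝒳 → 𝒰 → 𝒳 → ℝ} {gu : ℕ → 𝒳 → 𝒰 → ℝ} {q0 : 𝒳 → ℝ}
    (hfx : ∀ k x u, IsPmf (fx k x u)) (hgx : ∀ k x u x', 0 < gx k x u x')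
    (hgu : ∀ k x u, 0 < gu k x u) (hfu : IsPolicy (T + 1) fu) (hp0 : ∀ x, 0 ≤ p0 x)
    (hpq : ∀ x, 0 < p0 x → 0 < q0 x) :
    KL (trajPmf (T + 1) fx fu p0) (trajPmf (T + 1) gx gu q0) =
      KL p0 q0 + ∑ x, p0 x * (KL (fu 1 x) (gu 1 x) + ∑ u, fu 1 x u *
        KL (trajPmf T (fun k => fx (k + 1)) (fun k => fu (k + 1)) (fx 1 x u))
          (trajPmf T (fun k => gx (k + 1)) (fun k => gu (k + 1)) (gx 1 x u))) := by
  have hfu1 : ∀ x, IsPmf (fu 1 x) := hfu 1 le_rfl (by omega)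
  have hrest : ∀ x u, IsPmf (trajPmf T (fun k => fx (k + 1)) (fun k => fu (k + 1)) (fx 1 x u)) :=
    fun x u => isPmf_trajPmf (fun k => hfx (k + 1)) hfu.shift (hfx 1 x u)
  have hrest_pos :
      ∀ x u t, 0 < trajPmf T (fun k => gx (k + 1)) (fun k => gu (k + 1)) (gx 1 x u) t :=
    fun x u => trajPmf_pos (fun k => hgx (k + 1)) (fun k => hgu (k + 1)) (hgx 1 x u)
  rw [← KL_comp_equiv (trajConsEquiv T), trajPmf_comp_consEquiv, trajPmf_comp_consEquiv,
    KL_chain_rule hp0 hpq (fun x => (hfu1 x).prod (hrest x))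
      (fun x b => mul_pos (hgu 1 x b.1) (hrest_pos x b.1 b.2))]
  congr! 3 with x
  exact KL_chain_rule (hfu1 x).1 (fun u _ => hgu 1 x u) (hrest x) (hrest_pos x)

end Trajectory

section OptimalPolicy

variable {𝒳 𝒰 : Type} [Fintype 𝒳] [Fintype 𝒰]

noncomputable def omegaHat (T : ℕ) (fx gx : ℕ → 𝒳 → 𝒰 → 𝒳 → ℝ) (gu : ℕ → 𝒳 → 𝒰 → ℝ)
    (k : ℕ) (u : 𝒰) (x : 𝒳) : ℝ :=
  KL (fx k x u) (gx k x u) - ∑ x', fx k x u x' * log (gamAux T fx gx gu (T - k) x')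

noncomputable def optPolicy (T : ℕ) (fx gx : ℕ → 𝒳 → 𝒰 → 𝒳 → ℝ) (gu : ℕ → 𝒳 → 𝒰 → ℝ)
    (k : ℕ) (x : 𝒳) (u : 𝒰) : ℝ :=
  gu k x u * exp (-omegaHat T fx gx gu k u x) / gamAux T fx gx gu (T - (k - 1)) x

variable {T : ℕ} {fx gx : ℕ → 𝒳 → 𝒰 → 𝒳 → ℝ} {gu : ℕ → 𝒳 → 𝒰 → ℝ}

lemma gamAux_pos [Nonempty 𝒰] (hgu : ∀ k x u, 0 < gu k x u) (m : ℕ) (x : 𝒳) :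
    0 < gamAux T fx gx gu m x := by
  cases m with
  | zero => exact one_pos
  | succ m => exact sum_pos (fun u _ => mul_pos (hgu _ _ _) (exp_pos _)) univ_nonempty

lemma gamAux_sub_pred {k : ℕ} (hk : 1 ≤ k) (hkT : k ≤ T) (x : 𝒳) :
    gamAux T fx gx gu (T - (k - 1)) x = ∑ u, gu k x u * exp (-omegaHat T fx gx gu k u x) := by
  rw [show T - (k - 1) = T - k + 1 by omega, gamAux, show T - (T - k) = k by omega]
  simp only [omegaHat, neg_sub, neg_add_eq_sub]

lemma gamAux_self (hT : 1 ≤ T) (x : 𝒳) :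
    gamAux T fx gx gu T x = ∑ u, gu 1 x u * exp (-omegaHat T fx gx gu 1 u x) := by
  simpa using gamAux_sub_pred (gu := gu) le_rfl hT x

lemma optPolicy_eq_div_sum {k : ℕ} (hk : 1 ≤ k) (hkT : k ≤ T) (x : 𝒳) :
    optPolicy T fx gx gu k x = fun u => gu k x u * exp (-omegaHat T fx gx gu k u x) /
      ∑ v, gu k x v * exp (-omegaHat T fx gx gu k v x) := by
  funext u
  rw [optPolicy, gamAux_sub_pred hk hkT]

lemma isPolicy_optPolicy [Nonempty 𝒰] (hgu : ∀ k x u, 0 < gu k x u) :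
    IsPolicy T (optPolicy T fx gx gu) := fun k hk hkT x => by
  rw [optPolicy_eq_div_sum hk hkT x]
  exact isPmf_div_sum fun u => mul_pos (hgu k x u) (exp_pos _)

lemma gamAux_shift {m : ℕ} (hm : m ≤ T + 1) :
    gamAux T (fun k => fx (k + 1)) (fun k => gx (k + 1)) (fun k => gu (k + 1)) m =
      gamAux (T + 1) fx gx gu m := by
  induction m with
  | zero => rfl
  | succ m ih =>
    funext x
    simp only [gamAux, ih (by omega), show T - m + 1 = T + 1 - m by omega]

lemma omegaHat_shift (k : ℕ) :
    omegaHat T (fun k => fx (k + 1)) (fun k => gx (k + 1)) (fun k => gu (k + 1)) k =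
      omegaHat (T + 1) fx gx gu (k + 1) := by
  funext u x
  rw [omegaHat, omegaHat, gamAux_shift (by omega), Nat.add_sub_add_right]

lemma optPolicy_shift {k : ℕ} (hk : 1 ≤ k) :
    optPolicy T (fun k => fx (k + 1)) (fun k => gx (k + 1)) (fun k => gu (k + 1)) k =
      optPolicy (T + 1) fx gx gu (k + 1) := by
  funext x u
  rw [optPolicy, optPolicy, omegaHat_shift, gamAux_shift (by omega),
    show T - (k - 1) = T + 1 - (k + 1 - 1) by omega]

lemma omegaHat_one_eq_shift :
    omegaHat (T + 1) fx gx gu 1 = fun u x => KL (fx 1 x u) (gx 1 x u) -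
      ∑ x', fx 1 x u x' *
        log (gamAux T (fun k => fx (k + 1)) (fun k => gx (k + 1)) (fun k => gu (k + 1)) T x') := by
  funext u x
  rw [omegaHat, gamAux_shift (by omega), Nat.add_sub_cancel]

end OptimalPolicy

section Optimality

variable {𝒳 𝒰 : Type} [Fintype 𝒳] [Fintype 𝒰] [Nonempty 𝒰] {T : ℕ}
  {fx gx : ℕ → 𝒳 → 𝒰 → 𝒳 → ℝ} {gu fu : ℕ → 𝒳 → 𝒰 → ℝ} {p0 q0 : 𝒳 → ℝ}

theorem sub_sum_log_gamAux_le_KL_trajPmf (hfx : ∀ k x u, IsPmf (fx k x u))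
    (hgx : ∀ k x u x', 0 < gx k x u x') (hgu : ∀ k x u, 0 < gu k x u) (hp0 : ∀ x, 0 ≤ p0 x)
    (hpq : ∀ x, 0 < p0 x → 0 < q0 x) (hfu : IsPolicy T fu) :
    KL p0 q0 - ∑ x, p0 x * log (gamAux T fx gx gu T x) ≤
      KL (trajPmf T fx fu p0) (trajPmf T gx gu q0) := by
  induction T generalizing fx gx gu fu p0 q0 with
  | zero => simp [KL_trajPmf_zero, gamAux]
  | succ T ih =>
    have hfu1 : ∀ x, IsPmf (fu 1 x) := hfu 1 le_rfl (by omega)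
    have hω : ∀ x u, omegaHat (T + 1) fx gx gu 1 u x ≤
        KL (trajPmf T (fun k => fx (k + 1)) (fun k => fu (k + 1)) (fx 1 x u))
          (trajPmf T (fun k => gx (k + 1)) (fun k => gu (k + 1)) (gx 1 x u)) := by
      intro x u
      rw [omegaHat_one_eq_shift]
      exact ih (fun k => hfx (k + 1)) (fun k => hgx (k + 1)) (fun k => hgu (k + 1))
        (hfx 1 x u).1 (fun x' _ => hgx 1 x u x') hfu.shift
    have hgibbs : ∀ x, -log (gamAux (T + 1) fx gx gu (T + 1) x) ≤
        KL (fu 1 x) (gu 1 x) + ∑ u, fu 1 x u * omegaHat (T + 1) fx gx gu 1 u x := by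
      intro x
      rw [← KL_mul_exp _ (hfu1 x).1 (hgu 1 x), gamAux_self (by omega)]
      exact neg_log_sum_le_KL (hfu1 x) fun u => mul_pos (hgu 1 x u) (exp_pos _)
    rw [KL_trajPmf_succ hfx hgx hgu hfu hp0 hpq, sub_eq_add_neg, ← sum_neg_distrib]
    refine add_le_add_right (sum_le_sum fun x _ => ?_) _
    rw [← mul_neg]
    refine mul_le_mul_of_nonneg_left ((hgibbs x).trans ?_) (hp0 x)
    gcongr with u
    exacts [(hfu1 x).1 u, hω x u]

theorem KL_trajPmf_optPolicy (hfx : ∀ k x u, IsPmf (fx k x u))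
    (hgx : ∀ k x u x', 0 < gx k x u x') (hgu : ∀ k x u, 0 < gu k x u) (hp0 : ∀ x, 0 ≤ p0 x)
    (hpq : ∀ x, 0 < p0 x → 0 < q0 x) (hfu : ∀ k, 1 ≤ k → k ≤ T → fu k = optPolicy T fx gx gu k) :
    KL (trajPmf T fx fu p0) (trajPmf T gx gu q0) =
      KL p0 q0 - ∑ x, p0 x * log (gamAux T fx gx gu T x) := by
  induction T generalizing fx gx gu fu p0 q0 with
  | zero => simp [KL_trajPmf_zero, gamAux]
  | succ T ih =>
    have hpol : IsPolicy (T + 1) fu := fun k hk hkT =>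
      hfu k hk hkT ▸ isPolicy_optPolicy hgu k hk hkT
    have hω : ∀ x u,
        KL (trajPmf T (fun k => fx (k + 1)) (fun k => fu (k + 1)) (fx 1 x u))
          (trajPmf T (fun k => gx (k + 1)) (fun k => gu (k + 1)) (gx 1 x u)) =
        omegaHat (T + 1) fx gx gu 1 u x := by
      intro x u
      rw [omegaHat_one_eq_shift]
      refine ih (fun k => hfx (k + 1)) (fun k => hgx (k + 1)) (fun k => hgu (k + 1))
        (hfx 1 x u).1 (fun x' _ => hgx 1 x u x') fun k hk hkT => ?_
      rw [optPolicy_shift hk]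
      exact hfu (k + 1) (by omega) (by omega)
    have hgibbs : ∀ x, KL (fu 1 x) (gu 1 x) + ∑ u, fu 1 x u * omegaHat (T + 1) fx gx gu 1 u x =
        -log (gamAux (T + 1) fx gx gu (T + 1) x) := by
      intro x
      rw [← KL_mul_exp _ ((hpol 1 le_rfl (by omega)) x).1 (hgu 1 x), gamAux_self (by omega),
        hfu 1 le_rfl (by omega), optPolicy_eq_div_sum le_rfl (by omega)]
      exact KL_div_sum fun u => mul_pos (hgu 1 x u) (exp_pos _)
    simp only [KL_trajPmf_succ hfx hgx hgu hpol hp0 hpq, hω, hgibbs, mul_neg, sum_neg_distrib,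
      sub_eq_add_neg]

end Optimality

theorem statement13_general {𝒳 𝒰 : Type} [Fintype 𝒳] [Fintype 𝒰] [Nonempty 𝒰]
    (T : ℕ)
    (fx gx : ℕ → 𝒳 → 𝒰 → 𝒳 → ℝ) (gu : ℕ → 𝒳 → 𝒰 → ℝ) (f0 : 𝒳 → ℝ)
    (hfx : ∀ k x u, (∀ x', 0 ≤ fx k x u x') ∧ ∑ x', fx k x u x' = 1)
    (hgx : ∀ k x u, (∀ x', 0 < gx k x u x') ∧ ∑ x', gx k x u x' = 1)
    (hgu : ∀ k x, (∀ u, 0 < gu k x u) ∧ ∑ u, gu k x u = 1)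
    (hf0 : (∀ x, 0 ≤ f0 x) ∧ ∑ x, f0 x = 1)
    (γ : ℕ → 𝒳 → ℝ) (hγ : ∀ k, γ k = gamAux T fx gx gu (T - k))
    (ωh : ℕ → 𝒰 → 𝒳 → ℝ)
    (hωh : ∀ k u x, ωh k u x =
      KL (fx k x u) (gx k x u) - ∑ x', fx k x u x' * Real.log (γ k x'))
    (fustar : ℕ → 𝒳 → 𝒰 → ℝ)
    (hfustar : ∀ k x u, fustar k x u = gu k x u * Real.exp (-(ωh k u x)) / γ (k - 1) x)
    (g : ((Fin (T + 1) → 𝒳) × (Fin T → 𝒰)) → ℝ)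
    (hg : ∀ t, g t = f0 (t.1 0) * ∏ k : Fin T,
      gx ((k : ℕ) + 1) (t.1 k.castSucc) (t.2 k) (t.1 k.succ) *
        gu ((k : ℕ) + 1) (t.1 k.castSucc) (t.2 k))
    (F : (ℕ → 𝒳 → 𝒰 → ℝ) → ((Fin (T + 1) → 𝒳) × (Fin T → 𝒰)) → ℝ)
    (hF : ∀ fu t, F fu t = f0 (t.1 0) * ∏ k : Fin T,
      fx ((k : ℕ) + 1) (t.1 k.castSucc) (t.2 k) (t.1 k.succ) *
        fu ((k : ℕ) + 1) (t.1 k.castSucc) (t.2 k)) :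
    (∀ k ≤ T, ∀ x, 0 < γ k x) ∧
    (∀ k, 1 ≤ k → k ≤ T → ∀ x, (∀ u, 0 ≤ fustar k x u) ∧ ∑ u, fustar k x u = 1) ∧
    (∀ fu : ℕ → 𝒳 → 𝒰 → ℝ, (∀ k x, (∀ u, 0 ≤ fu k x u) ∧ ∑ u, fu k x u = 1) →
      KL (F fustar) g ≤ KL (F fu) g) ∧
    KL (F fustar) g = -∑ x0, f0 x0 * Real.log (γ 0 x0) := by
  have hgx_pos : ∀ k x u x', 0 < gx k x u x' := fun k x u x' => (hgx k x u).1 x'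
  have hgu_pos : ∀ k x u, 0 < gu k x u := fun k x u => (hgu k x).1 u
  have hfustar_eq : fustar = optPolicy T fx gx gu := by
    funext k x u
    rw [hfustar, hωh, hγ, hγ]
    rfl
  have hg_eq : g = trajPmf T gx gu f0 := funext hg
  have hF_eq : ∀ fu, F fu = trajPmf T fx fu f0 := fun fu => funext (hF fu)
  have hopt : KL (F fustar) g = -∑ x, f0 x * log (γ 0 x) := by
    rw [hF_eq, hg_eq, hfustar_eq, KL_trajPmf_optPolicy hfx hgx_pos hgu_pos hf0.1 (fun _ h => h)
      fun _ _ _ => rfl, KL_self, zero_sub, hγ, Nat.sub_zero]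
  refine ⟨fun k _ x => hγ k ▸ gamAux_pos hgu_pos _ x,
    fun k hk hkT x => hfustar_eq ▸ isPolicy_optPolicy hgu_pos k hk hkT x, fun fu hfu => ?_, hopt⟩
  rw [hopt, hF_eq, hg_eq, ← zero_sub, ← KL_self f0, hγ, Nat.sub_zero]
  exact sub_sum_log_gamAux_le_KL_trajPmf hfx hgx_pos hgu_pos hf0.1 (fun _ h => h)
    fun k _ _ => hfu k

/-- optimal solution of the (unconstrained) fully probabilistic design
problem. Trajectories are pairs `t = (x, u)` with `x : Fin (T+1) → 𝒳` the states
`X_0, ..., X_T` and `u : Fin T → 𝒰` the actions `U_1, ..., U_T`; the factor families are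
indexed by the time-steps `k ∈ 1:T`. With `γ_T = 1`,
`γ_k(x) = ∑_u g_{u,k+1}(u|x) exp(-D_KL(f_{x,k+1}(·|x,u)||g_{x,k+1}(·|x,u)) +
∑_{x'} f_{x,k+1}(x'|x,u) ln γ_{k+1}(x'))`,
`ω̂_k(u,x) = D_KL(f_{x,k}(·|x,u)||g_{x,k}(·|x,u)) - ∑_{x'} f_{x,k}(x'|x,u) ln γ_k(x')`, and
`f*_{u,k}(u|x) = g_{u,k}(u|x) exp(-ω̂_k(u,x)) / γ_{k-1}(x)`: each `γ_k` is strictly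
positive, each `f*_{u,k}(·|x)` is a pmf, the policy sequence `{f*_{u,k}}` minimizes
`D_KL(f||g)` over all policy sequences (where `f`, `g` are the joint trajectory pmfs with
shared prior `f_0 = g_0`), and the minimum equals `-∑_{x_0} f_0(x_0) ln γ_0(x_0)`. -/
theorem statement13 {𝒳 𝒰 : Type} [Fintype 𝒳] [Fintype 𝒰] [Nonempty 𝒳] [Nonempty 𝒰]
    (T : ℕ) (hT : 0 < T)
    (fx gx : ℕ → 𝒳 → 𝒰 → 𝒳 → ℝ) (gu : ℕ → 𝒳 → 𝒰 → ℝ) (f0 : 𝒳 → ℝ)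
    (hfx : ∀ k x u, (∀ x', 0 ≤ fx k x u x') ∧ ∑ x', fx k x u x' = 1)
    (hgx : ∀ k x u, (∀ x', 0 < gx k x u x') ∧ ∑ x', gx k x u x' = 1)
    (hgu : ∀ k x, (∀ u, 0 < gu k x u) ∧ ∑ u, gu k x u = 1)
    (hf0 : (∀ x, 0 ≤ f0 x) ∧ ∑ x, f0 x = 1)
    (γ : ℕ → 𝒳 → ℝ) (hγ : ∀ k, γ k = gamAux T fx gx gu (T - k))
    (ωh : ℕ → 𝒰 → 𝒳 → ℝ)
    (hωh : ∀ k u x, ωh k u x =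
      KL (fx k x u) (gx k x u) - ∑ x', fx k x u x' * Real.log (γ k x'))
    (fustar : ℕ → 𝒳 → 𝒰 → ℝ)
    (hfustar : ∀ k x u, fustar k x u = gu k x u * Real.exp (-(ωh k u x)) / γ (k - 1) x)
    (g : ((Fin (T + 1) → 𝒳) × (Fin T → 𝒰)) → ℝ)
    (hg : ∀ t, g t = f0 (t.1 0) * ∏ k : Fin T,
      gx ((k : ℕ) + 1) (t.1 k.castSucc) (t.2 k) (t.1 k.succ) *
        gu ((k : ℕ) + 1) (t.1 k.castSucc) (t.2 k))
    (F : (ℕ → 𝒳 → 𝒰 → ℝ) → ((Fin (T + 1) → 𝒳) × (Fin T → 𝒰)) → ℝ)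
    (hF : ∀ fu t, F fu t = f0 (t.1 0) * ∏ k : Fin T,
      fx ((k : ℕ) + 1) (t.1 k.castSucc) (t.2 k) (t.1 k.succ) *
        fu ((k : ℕ) + 1) (t.1 k.castSucc) (t.2 k)) :
    (∀ k ≤ T, ∀ x, 0 < γ k x) ∧
    (∀ k, 1 ≤ k → k ≤ T → ∀ x, (∀ u, 0 ≤ fustar k x u) ∧ ∑ u, fustar k x u = 1) ∧
    (∀ fu : ℕ → 𝒳 → 𝒰 → ℝ, (∀ k x, (∀ u, 0 ≤ fu k x u) ∧ ∑ u, fu k x u = 1) →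
      KL (F fustar) g ≤ KL (F fu) g) ∧
    KL (F fustar) g = -∑ x0, f0 x0 * Real.log (γ 0 x0) :=
  statement13_general T fx gx gu f0 hfx hgx hgu hf0 γ hγ ωh hωh fustar hfustar g hg F hF
end
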